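/- Let X be a real Banach space, A : X → Set X an accretive operator with zer A ≠ ∅, and for each γ > 0 let J_γ : X → X be a resolvent function of A. Let α ∈ [0,1), f : X → X an α-contraction, x ∈ X, e* ∈ X, and set J = 2⌈1/(1 − α)⌉, α_n = 2/((1 − α)(n + J)), λ_n = (n + J)/(n + J − 1), e_n = (1/(n + J)²) • e* for all n ∈ ℕ; let (x_n) be the VAMe iteration x_0 = x, x_{n+1} = α_n • f(x_n) + (1 − α_n) • J_{λ_n}(x_n) + e_n. Let z ∈ zer A and K_z ∈ ℕ, K_z ≥ 1, with K_z ≥ max{‖x − z‖, ‖f(z) − z‖/(1 − α)} + ⌈‖e*‖/(J − 1)⌉. Then for all n ∈ ℕ, ‖x_{n+1} − x_n‖ ≤ (3·J·K_z + ‖e*‖)/((1 − α)(n + J)); consequently, Φ₀(k) = (3·J·K_z + ⌈‖e*‖⌉)·⌈1/(1 − α)⌉·(k + 1) − J is a rate of asymptotic regularity of (x_n). -/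

import Mathlib

/-!
The resolvent `J_γ` of an accretive operator is nonexpansive, fixes every zero of `A`, and satisfies
`‖J_μ p - J_ν p‖ ≤ (1 - μ / ν) ‖p - J_ν p‖` for `μ ≤ ν` (the resolvent identity); with
`λ_n = m / (m - 1)`, `m = n + J`, the factor `1 - λ_{n+1} / λ_n` is exactly `1 / m²`.
Each step is a convex combination of an `α`-contraction and a nonexpansive map fixing `z`, plus an
error whose norms sum to at most `‖e*‖ / (J - 1)`, so all iterates stay within `K_z` of `z`.
Subtracting consecutive steps then yields, for `s_n = ‖x_{n+1} - x_n‖` and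
`D = (3 J K_z + ‖e*‖) / (1 - α)`, the recursion `s_{n+1} ≤ (1 - 2 / (m + 1)) s_n + D / (m (m + 1))`,
and `s_n ≤ D / (n + J)` follows by induction.
-/

open Finset

section Resolvent

variable {X : Type*} [NormedAddCommGroup X] [NormedSpace ℝ X]

def IsAccretive (A : X → Set X) : Prop :=
  ∀ x y u v : X, u ∈ A x → v ∈ A y → ∀ γ : ℝ, 0 < γ → ‖x - y‖ ≤ ‖x - y + γ • (u - v)‖

def IsResolvent (A : X → Set X) (Jr : ℝ → X → X) : Prop :=
  ∀ γ : ℝ, 0 < γ → ∀ x : X, γ⁻¹ • (x - Jr γ x) ∈ A (Jr γ x)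

namespace IsResolvent

variable {A : X → Set X} {Jr : ℝ → X → X}

theorem apply_eq_of_zero_mem (hJ : IsResolvent A Jr) (hA : IsAccretive A) {γ : ℝ} (hγ : 0 < γ)
    {z : X} (hz : 0 ∈ A z) : Jr γ z = z := by
  have h := hA _ _ _ _ (hJ γ hγ z) hz γ hγ
  rwa [sub_zero, smul_inv_smul₀ hγ.ne', sub_add_sub_cancel', sub_self, norm_zero, norm_le_zero_iff,
    sub_eq_zero] at h

theorem norm_sub_le (hJ : IsResolvent A Jr) (hA : IsAccretive A) {γ : ℝ} (hγ : 0 < γ) (p q : X) :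
    ‖Jr γ p - Jr γ q‖ ≤ ‖p - q‖ := by
  have h := hA _ _ _ _ (hJ γ hγ p) (hJ γ hγ q) γ hγ
  rwa [← smul_sub, smul_inv_smul₀ hγ.ne',
    show Jr γ p - Jr γ q + (p - Jr γ p - (q - Jr γ q)) = p - q by abel] at h

theorem norm_apply_sub_apply_le (hJ : IsResolvent A Jr) (hA : IsAccretive A) {μ ν : ℝ}
    (hμ : 0 < μ) (hμν : μ ≤ ν) (p : X) :
    ‖Jr μ p - Jr ν p‖ ≤ (1 - μ / ν) * ‖p - Jr ν p‖ := by
  have hν : 0 < ν := hμ.trans_le hμν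
  have hmem : μ⁻¹ • ((μ / ν) • (p - Jr ν p)) ∈ A (Jr ν p) := by
    rw [smul_smul, inv_mul_eq_div, div_div_cancel_left' hμ.ne']
    exact hJ ν hν p
  have h := hA _ _ _ _ (hJ μ hμ p) hmem μ hμ
  rwa [← smul_sub, smul_inv_smul₀ hμ.ne',
    show Jr μ p - Jr ν p + (p - Jr μ p - (μ / ν) • (p - Jr ν p)) = (1 - μ / ν) • (p - Jr ν p) by
      module,
    norm_smul_of_nonneg (sub_nonneg.2 ((div_le_one hν).2 hμν))] at h

theorem norm_apply_div_sub_apply_div_le (hJ : IsResolvent A Jr) (hA : IsAccretive A) {m : ℝ}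
    (hm : 1 < m) (p : X) :
    ‖Jr ((m + 1) / m) p - Jr (m / (m - 1)) p‖ ≤ 1 / m ^ 2 * ‖p - Jr (m / (m - 1)) p‖ := by
  have hm0 : 0 < m := by linarith
  have hm1 : 0 < m - 1 := by linarith
  have hle : (m + 1) / m ≤ m / (m - 1) := by
    rw [div_le_div_iff₀ hm0 hm1]; nlinarith
  convert hJ.norm_apply_sub_apply_le hA (by positivity) hle p using 2
  field_simp
  ring

end IsResolvent

end Resolvent

section Iteration

variable {X : Type*} [NormedAddCommGroup X] [NormedSpace ℝ X]

theorem norm_smul_add_one_sub_smul_le {a : ℝ} (ha0 : 0 ≤ a) (ha1 : a ≤ 1) (u v : X) :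
    ‖a • u + (1 - a) • v‖ ≤ a * ‖u‖ + (1 - a) * ‖v‖ := by
  grw [norm_add_le, norm_smul_of_nonneg ha0, norm_smul_of_nonneg (sub_nonneg.2 ha1)]

theorem norm_step_sub_le_max {f T : X → X} {α a : ℝ} {p z e : X} (hα0 : 0 ≤ α) (hα1 : α < 1)
    (hf : ‖f p - f z‖ ≤ α * ‖p - z‖) (hT : ‖T p - z‖ ≤ ‖p - z‖) (ha0 : 0 ≤ a) (ha1 : a ≤ 1) :
    ‖a • f p + (1 - a) • T p + e - z‖ ≤ max ‖p - z‖ (‖f z - z‖ / (1 - α)) + ‖e‖ := by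
  set R := max ‖p - z‖ (‖f z - z‖ / (1 - α))
  have hfR : ‖f p - z‖ ≤ R := calc
    ‖f p - z‖ ≤ ‖f p - f z‖ + ‖f z - z‖ := norm_sub_le_norm_sub_add_norm_sub _ _ _
    _ ≤ α * R + (1 - α) * R := by
      gcongr
      · exact hf.trans (by gcongr; exact le_max_left _ _)
      · exact (div_le_iff₀' (sub_pos.2 hα1)).1 (le_max_right _ _)
    _ = R := by ring
  calc _ = ‖(a • (f p - z) + (1 - a) • (T p - z)) + e‖ := by congr 1; module
    _ ≤ a * ‖f p - z‖ + (1 - a) * ‖T p - z‖ + ‖e‖ := by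
      grw [norm_add_le, norm_smul_add_one_sub_smul_le ha0 ha1]
    _ ≤ a * R + (1 - a) * R + ‖e‖ := by
      gcongr
      exact hT.trans (le_max_left _ _)
    _ = R + ‖e‖ := by ring

theorem norm_iterate_sub_le {f : X → X} {T : ℕ → X → X} {α : ℝ} {a : ℕ → ℝ} {e xs : ℕ → X}
    {z : X} (hα0 : 0 ≤ α) (hα1 : α < 1) (hf : ∀ p, ‖f p - f z‖ ≤ α * ‖p - z‖)
    (hT : ∀ n p, ‖T n p - z‖ ≤ ‖p - z‖) (ha0 : ∀ n, 0 ≤ a n) (ha1 : ∀ n, a n ≤ 1)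
    (hxs : ∀ n, xs (n + 1) = a n • f (xs n) + (1 - a n) • T n (xs n) + e n) (n : ℕ) :
    ‖xs n - z‖ ≤ max ‖xs 0 - z‖ (‖f z - z‖ / (1 - α)) + ∑ i ∈ range n, ‖e i‖ := by
  induction n with
  | zero => simp
  | succ n ih =>
    rw [hxs, sum_range_succ, ← add_assoc]
    refine (norm_step_sub_le_max hα0 hα1 (hf _) (hT n _) (ha0 n) (ha1 n)).trans ?_
    gcongr
    exact max_le ih
      (le_add_of_le_of_nonneg (le_max_right _ _) (sum_nonneg fun i _ => norm_nonneg _))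

theorem norm_step_sub_step_le {f S T : X → X} {α a b : ℝ} {p q e e' : X}
    (hf : ‖f q - f p‖ ≤ α * ‖q - p‖) (hS : ‖S q - S p‖ ≤ ‖q - p‖)
    (hb0 : 0 ≤ b) (hb1 : b ≤ 1) (hba : b ≤ a) :
    ‖(b • f q + (1 - b) • S q + e') - (a • f p + (1 - a) • T p + e)‖ ≤
      (1 - (1 - α) * b) * ‖q - p‖ + (1 - b) * ‖S p - T p‖ + (a - b) * ‖T p - f p‖
        + ‖e' - e‖ := by
  have hconv := norm_smul_add_one_sub_smul_le hb0 hb1 (f q - f p) (S q - S p)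
  calc _ = ‖(b • (f q - f p) + (1 - b) • (S q - S p)) + (1 - b) • (S p - T p)
          + (a - b) • (T p - f p) + (e' - e)‖ := by congr 1; module
    _ ≤ ‖b • (f q - f p) + (1 - b) • (S q - S p)‖ + (1 - b) * ‖S p - T p‖
          + (a - b) * ‖T p - f p‖ + ‖e' - e‖ := by
      grw [norm_add_le, norm_add_le, norm_add_le, norm_smul_of_nonneg (sub_nonneg.2 hb1),
        norm_smul_of_nonneg (sub_nonneg.2 hba)]
    _ ≤ _ := by
      have := mul_le_mul_of_nonneg_left hf hb0
      have := mul_le_mul_of_nonneg_left hS (sub_nonneg.2 hb1)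
      linarith

end Iteration

theorem sum_range_one_div_add_sq_le {J : ℝ} (hJ : 1 < J) (n : ℕ) :
    ∑ i ∈ range n, 1 / ((i : ℝ) + J) ^ 2 ≤ 1 / (J - 1) := by
  set g : ℕ → ℝ := fun i => 1 / ((i : ℝ) + J - 1)
  have hg : ∀ i : ℕ, 1 / ((i : ℝ) + J) ^ 2 ≤ g i - g (i + 1) := fun i => by
    have hi : 0 < (i : ℝ) + J - 1 := by linarith [i.cast_nonneg (α := ℝ)]
    simp only [g, Nat.cast_succ, add_right_comm _ (1 : ℝ), add_sub_cancel_right]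
    rw [div_sub_div _ _ hi.ne' (by linarith), div_le_div_iff₀ (by positivity) (by positivity)]
    nlinarith
  calc ∑ i ∈ range n, 1 / ((i : ℝ) + J) ^ 2 ≤ ∑ i ∈ range n, (g i - g (i + 1)) :=
        sum_le_sum fun i _ => hg i
    _ = g 0 - g n := sum_range_sub' g n
    _ ≤ 1 / (J - 1) := by
      have : 0 ≤ g n := div_nonneg zero_le_one (by linarith [n.cast_nonneg (α := ℝ)])
      simp only [g, Nat.cast_zero, zero_add] at this ⊢
      linarith

theorem le_div_add_of_rec {s : ℕ → ℝ} {J D : ℝ} (hJ : 1 ≤ J) (h0 : s 0 ≤ D / J)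
    (hs : ∀ n : ℕ, s (n + 1) ≤
      (1 - 2 / ((n : ℝ) + J + 1)) * s n + D / (((n : ℝ) + J) * ((n : ℝ) + J + 1)))
    (n : ℕ) : s n ≤ D / ((n : ℝ) + J) := by
  induction n with
  | zero => simpa using h0
  | succ n ih =>
    have hm : 1 ≤ (n : ℝ) + J := by linarith [n.cast_nonneg (α := ℝ)]
    have hc : 0 ≤ 1 - 2 / ((n : ℝ) + J + 1) := by
      rw [sub_nonneg, div_le_one (by linarith)]; linarith
    calc s (n + 1) ≤ (1 - 2 / ((n : ℝ) + J + 1)) * (D / ((n : ℝ) + J))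
          + D / (((n : ℝ) + J) * ((n : ℝ) + J + 1)) := by grw [hs n, ih]
      _ = D / (((n + 1 : ℕ) : ℝ) + J) := by
        push_cast
        field_simp
        ring

theorem vame_initial_le {t K E J : ℝ} (ht : 0 < t) (ht1 : t ≤ 1) (hK : 0 ≤ K) (hE : 0 ≤ E)
    (hJ : 1 ≤ J) :
    2 * K + E / J ^ 2 ≤ (3 * J * K + E) / t / J := by
  rw [div_div, ← sub_nonneg]
  have key : (3 * J * K + E) / (t * J) - (2 * K + E / J ^ 2)
      = (J ^ 2 * K * (3 - 2 * t) + E * (J - t)) / (t * J ^ 2) := by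
    field_simp
    ring
  rw [key]
  apply div_nonneg _ (by positivity)
  have : 0 ≤ J ^ 2 * K * (3 - 2 * t) := by apply mul_nonneg <;> nlinarith
  nlinarith

theorem vame_perturbation_le {t K E J m : ℝ} (ht1 : t ≤ 1) (hK : 0 ≤ K) (hE : 0 ≤ E)
    (hJ : 2 ≤ J) (hm : 2 ≤ m) (htm : 2 ≤ t * (m + 1)) :
    (1 - 2 / (t * (m + 1))) * (1 / m ^ 2 * (2 * K)) + (2 / (t * m) - 2 / (t * (m + 1))) * (2 * K)
      + (1 / m ^ 2 - 1 / (m + 1) ^ 2) * E ≤ (3 * J * K + E) / t / (m * (m + 1)) := by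
  have ht : 0 < t := by nlinarith
  rw [← sub_nonneg]
  have key : (3 * J * K + E) / t / (m * (m + 1)) - ((1 - 2 / (t * (m + 1))) * (1 / m ^ 2 * (2 * K))
      + (2 / (t * m) - 2 / (t * (m + 1))) * (2 * K) + (1 / m ^ 2 - 1 / (m + 1) ^ 2) * E)
      = ((3 * J - 6) * K * (m * (m + 1)) + 2 * K * ((m + 1) * (m + 2 - t * (m + 1)))
        + E * (m * (m + 1) - t * (2 * m + 1))) / (t * m ^ 2 * (m + 1) ^ 2) := by
    field_simp
    ring
  rw [key]
  apply div_nonneg _ (by positivity)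
  have h1 : 0 ≤ (3 * J - 6) * K * (m * (m + 1)) := by
    apply mul_nonneg (mul_nonneg (by linarith) hK); positivity
  have h2 : 0 ≤ 2 * K * ((m + 1) * (m + 2 - t * (m + 1))) := by
    apply mul_nonneg (by linarith) (mul_nonneg (by linarith) (by nlinarith))
  have h3 : 0 ≤ E * (m * (m + 1) - t * (2 * m + 1)) := mul_nonneg hE (by nlinarith)
  linarith

theorem div_le_one_div_succ_of_ceil_le {t C : ℝ} {N J k n : ℕ} (ht : 0 < t) (hJ : 0 < J)
    (hC : C ≤ N) (hn : N * ⌈1 / t⌉₊ * (k + 1) - J ≤ n) :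
    C / (t * ((n : ℝ) + J)) ≤ 1 / ((k : ℝ) + 1) := by
  have hceil : 1 ≤ t * ⌈1 / t⌉₊ := by
    have := Nat.le_ceil (1 / t)
    rwa [div_le_iff₀' ht] at this
  have hN : ((N * ⌈1 / t⌉₊ * (k + 1) : ℕ) : ℝ) ≤ n + J := by
    exact_mod_cast (by omega : N * ⌈1 / t⌉₊ * (k + 1) ≤ n + J)
  push_cast at hN
  rw [div_le_div_iff₀ (by positivity) (by positivity), one_mul]
  calc C * (k + 1) ≤ N * (k + 1) * (t * ⌈1 / t⌉₊) := by
        grw [hC]; exact le_mul_of_one_le_right (by positivity) hceil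
    _ = t * (N * ⌈1 / t⌉₊ * (k + 1)) := by ring
    _ ≤ t * (n + J) := by gcongr

section VAMe

variable {X : Type*} [NormedAddCommGroup X] [NormedSpace ℝ X]

theorem vame_norm_step_zero_le {f T : X → X} {α J K : ℝ} {p q estar : X} (hα0 : 0 ≤ α)
    (hα1 : α < 1) (hJ : 2 ≤ (1 - α) * J) (hfp : ‖f p - p‖ ≤ 2 * K) (hTp : ‖T p - p‖ ≤ 2 * K)
    (hq : q = (2 / ((1 - α) * J)) • f p + (1 - 2 / ((1 - α) * J)) • T p + (1 / J ^ 2) • estar) :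
    ‖q - p‖ ≤ (3 * J * K + ‖estar‖) / (1 - α) / J := by
  set a := 2 / ((1 - α) * J)
  have ht : 0 < 1 - α := sub_pos.2 hα1
  have hJ1 : 1 ≤ J := by nlinarith
  have ha0 : 0 ≤ a := by positivity
  have ha1 : a ≤ 1 := (div_le_one (by linarith)).2 hJ
  have hK : 0 ≤ K := by linarith [norm_nonneg (f p - p)]
  calc ‖q - p‖ = ‖(a • (f p - p) + (1 - a) • (T p - p)) + (1 / J ^ 2) • estar‖ := by
        rw [hq]; congr 1; module
    _ ≤ a * (2 * K) + (1 - a) * (2 * K) + ‖estar‖ / J ^ 2 := by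
        grw [norm_add_le, norm_smul_add_one_sub_smul_le ha0 ha1, hfp, hTp,
          norm_smul_of_nonneg (by positivity), one_div_mul_eq_div]
        linarith
    _ ≤ (3 * J * K + ‖estar‖) / (1 - α) / J := by
        have := vame_initial_le ht (by linarith) hK (norm_nonneg estar) hJ1
        linarith

theorem vame_norm_step_succ_le {f S T : X → X} {α J K m : ℝ} {p q r estar : X} (hα0 : 0 ≤ α)
    (hJ : 2 ≤ J) (hm : 2 ≤ m) (htm : 2 ≤ (1 - α) * (m + 1))
    (hf : ‖f q - f p‖ ≤ α * ‖q - p‖) (hS : ‖S q - S p‖ ≤ ‖q - p‖)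
    (hST : ‖S p - T p‖ ≤ 1 / m ^ 2 * ‖p - T p‖) (hpT : ‖p - T p‖ ≤ 2 * K)
    (hTf : ‖T p - f p‖ ≤ 2 * K)
    (hq : q = (2 / ((1 - α) * m)) • f p + (1 - 2 / ((1 - α) * m)) • T p + (1 / m ^ 2) • estar)
    (hr : r = (2 / ((1 - α) * (m + 1))) • f q + (1 - 2 / ((1 - α) * (m + 1))) • S q
      + (1 / (m + 1) ^ 2) • estar) :
    ‖r - q‖ ≤ (1 - 2 / (m + 1)) * ‖q - p‖ + (3 * J * K + ‖estar‖) / (1 - α) / (m * (m + 1)) := by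
  set a := 2 / ((1 - α) * m)
  set b := 2 / ((1 - α) * (m + 1))
  have ht : 0 < 1 - α := by nlinarith
  have hK : 0 ≤ K := by linarith [norm_nonneg (T p - f p)]
  have hb0 : 0 ≤ b := by positivity
  have hb1 : b ≤ 1 := (div_le_one (by linarith)).2 htm
  have hba : b ≤ a := div_le_div_of_nonneg_left zero_le_two (by positivity) (by nlinarith)
  have hcoef : 1 - (1 - α) * b = 1 - 2 / (m + 1) := by simp only [b]; field_simp
  have he : ‖(1 / (m + 1) ^ 2) • estar - (1 / m ^ 2) • estar‖
      = (1 / m ^ 2 - 1 / (m + 1) ^ 2) * ‖estar‖ := by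
    rw [← sub_smul, norm_smul, Real.norm_eq_abs, abs_sub_comm, abs_of_nonneg (sub_nonneg.2
      (one_div_le_one_div_of_le (by positivity) (pow_le_pow_left₀ (by linarith) (by linarith) 2)))]
  have h := norm_step_sub_step_le (T := T) (e := (1 / m ^ 2) • estar)
    (e' := (1 / (m + 1) ^ 2) • estar) hf hS hb0 hb1 hba
  rw [← hq, ← hr, hcoef, he] at h
  calc ‖r - q‖
      ≤ (1 - 2 / (m + 1)) * ‖q - p‖ + (1 - b) * (1 / m ^ 2 * (2 * K))
        + (a - b) * (2 * K) + (1 / m ^ 2 - 1 / (m + 1) ^ 2) * ‖estar‖ := by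
        grw [h, hST, hpT, hTf]
        all_goals linarith
    _ ≤ _ := by
        have := vame_perturbation_le (t := 1 - α) (by linarith) hK (norm_nonneg estar) hJ hm htm
        linarith

theorem vame_norm_sub_le
    {f : X → X} {T : ℕ → X → X} {α J : ℝ} {a : ℕ → ℝ} {e xs : ℕ → X} {z estar : X}
    (hα0 : 0 ≤ α) (hα1 : α < 1) (hf : ∀ p, ‖f p - f z‖ ≤ α * ‖p - z‖)
    (hT : ∀ n p, ‖T n p - z‖ ≤ ‖p - z‖) (hJ : 2 ≤ (1 - α) * J)
    (ha : ∀ n, a n = 2 / ((1 - α) * ((n : ℝ) + J)))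
    (he : ∀ n, e n = (1 / ((n : ℝ) + J) ^ 2) • estar)
    (hxs : ∀ n, xs (n + 1) = a n • f (xs n) + (1 - a n) • T n (xs n) + e n) (n : ℕ) :
    ‖xs n - z‖ ≤ max ‖xs 0 - z‖ (‖f z - z‖ / (1 - α)) + ‖estar‖ / (J - 1) := by
  have htm : ∀ n : ℕ, 2 ≤ (1 - α) * ((n : ℝ) + J) := fun n => by
    nlinarith [n.cast_nonneg (α := ℝ)]
  have ha0 : ∀ n, 0 ≤ a n := fun n => by
    rw [ha]; exact div_nonneg zero_le_two (by linarith [htm n])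
  have ha1 : ∀ n, a n ≤ 1 := fun n => by rw [ha, div_le_one (by linarith [htm n])]; exact htm n
  have hsum : ∑ i ∈ range n, ‖e i‖ ≤ ‖estar‖ / (J - 1) := calc
    ∑ i ∈ range n, ‖e i‖ = (∑ i ∈ range n, 1 / ((i : ℝ) + J) ^ 2) * ‖estar‖ := by
      simp only [he, norm_smul_of_nonneg (one_div_nonneg.2 (sq_nonneg _)), sum_mul]
    _ ≤ 1 / (J - 1) * ‖estar‖ := by
      gcongr; exact sum_range_one_div_add_sq_le (by nlinarith) n
    _ = ‖estar‖ / (J - 1) := one_div_mul_eq_div _ _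
  grw [norm_iterate_sub_le hα0 hα1 hf hT ha0 ha1 hxs n, hsum]

theorem vame_norm_succ_sub_le
    {f : X → X} {T : ℕ → X → X} {α J K : ℝ} {a : ℕ → ℝ} {e xs : ℕ → X} {z estar : X}
    (hα0 : 0 ≤ α) (hα1 : α < 1) (hf : ∀ p q, ‖f p - f q‖ ≤ α * ‖p - q‖)
    (hT : ∀ n p q, ‖T n p - T n q‖ ≤ ‖p - q‖) (hTz : ∀ n, T n z = z)
    (hTT : ∀ n p, ‖T (n + 1) p - T n p‖ ≤ 1 / ((n : ℝ) + J) ^ 2 * ‖p - T n p‖)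
    (hJ : 2 ≤ (1 - α) * J) (ha : ∀ n, a n = 2 / ((1 - α) * ((n : ℝ) + J)))
    (he : ∀ n, e n = (1 / ((n : ℝ) + J) ^ 2) • estar)
    (hxs : ∀ n, xs (n + 1) = a n • f (xs n) + (1 - a n) • T n (xs n) + e n)
    (hK : ∀ n, ‖xs n - z‖ ≤ K) (hfz : ‖f z - z‖ ≤ (1 - α) * K) (n : ℕ) :
    ‖xs (n + 1) - xs n‖ ≤ (3 * J * K + ‖estar‖) / ((1 - α) * ((n : ℝ) + J)) := by
  have hJ2 : 2 ≤ J := by nlinarith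
  have hcast : ∀ n : ℕ, ((n + 1 : ℕ) : ℝ) + J = (n : ℝ) + J + 1 := fun n => by push_cast; ring
  have hTK : ∀ n, ‖T n (xs n) - z‖ ≤ K := fun n => by
    simpa only [hTz] using (hT n (xs n) z).trans (hK n)
  have hfK : ∀ n, ‖f (xs n) - z‖ ≤ K := fun n => calc
    ‖f (xs n) - z‖ ≤ ‖f (xs n) - f z‖ + ‖f z - z‖ := norm_sub_le_norm_sub_add_norm_sub _ _ _
    _ ≤ α * K + (1 - α) * K := by gcongr; exact (hf _ _).trans (by gcongr; exact hK n)
    _ = K := by ring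
  have hdiam : ∀ {u v : X}, ‖u - z‖ ≤ K → ‖v - z‖ ≤ K → ‖u - v‖ ≤ 2 * K := fun {u v} hu hv => by
    have := norm_sub_le_norm_sub_add_norm_sub u z v
    rw [norm_sub_rev z] at this
    linarith
  rw [← div_div]
  refine le_div_add_of_rec (s := fun n => ‖xs (n + 1) - xs n‖) (by linarith) ?_ (fun n => ?_) n
  · refine vame_norm_step_zero_le hα0 hα1 hJ (hdiam (hfK 0) (hK 0)) (hdiam (hTK 0) (hK 0)) ?_
    simpa [ha, he] using hxs 0
  · refine vame_norm_step_succ_le hα0 hJ2 (by linarith [n.cast_nonneg (α := ℝ)])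
      (by nlinarith [n.cast_nonneg (α := ℝ)]) (hf _ _) (hT (n + 1) _ _) (hTT n _)
      (hdiam (hK n) (hTK n)) (hdiam (hTK n) (hfK n)) ?_ ?_
    · rw [hxs, ha, he]
    · rw [hxs, ha, he, hcast]

end VAMe

theorem stmt_17_general {X : Type*} [NormedAddCommGroup X] [NormedSpace ℝ X]
    (A : X → Set X)
    (hA : ∀ x y u v : X, u ∈ A x → v ∈ A y → ∀ γ : ℝ, 0 < γ →
      ‖x - y‖ ≤ ‖x - y + γ • (u - v)‖)
    (Jr : ℝ → X → X)
    (hJ : ∀ γ : ℝ, 0 < γ → ∀ x : X, γ⁻¹ • (x - Jr γ x) ∈ A (Jr γ x))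
    (α : ℝ) (hα0 : 0 ≤ α) (hα1 : α < 1)
    (f : X → X) (hf : ∀ x y : X, ‖f x - f y‖ ≤ α * ‖x - y‖)
    (x : X) (estar : X)
    (Jn : ℕ) (hJn : Jn = 2 * ⌈1 / (1 - α)⌉₊)
    (a : ℕ → ℝ) (ha : ∀ n : ℕ, a n = 2 / ((1 - α) * ((n : ℝ) + Jn)))
    (lam : ℕ → ℝ) (hlamdef : ∀ n : ℕ, lam n = ((n : ℝ) + Jn) / ((n : ℝ) + Jn - 1))
    (e : ℕ → X) (he : ∀ n : ℕ, e n = (1 / ((n : ℝ) + Jn) ^ 2) • estar)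
    (xs : ℕ → X) (hxs0 : xs 0 = x)
    (hxs : ∀ n : ℕ, xs (n + 1) = a n • f (xs n) + (1 - a n) • Jr (lam n) (xs n) + e n)
    (z : X) (hz : (0 : X) ∈ A z)
    (Kz : ℕ)
    (hKz : max ‖x - z‖ (‖f z - z‖ / (1 - α)) +
      (⌈‖estar‖ / ((Jn : ℝ) - 1)⌉₊ : ℝ) ≤ (Kz : ℝ)) :
    (∀ n : ℕ, ‖xs (n + 1) - xs n‖ ≤
      ((3 * Jn * Kz : ℕ) + ‖estar‖) / ((1 - α) * ((n : ℝ) + Jn))) ∧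
    (∀ k : ℕ, ∀ n,
      (3 * Jn * Kz + ⌈‖estar‖⌉₊) * ⌈1 / (1 - α)⌉₊ * (k + 1) - Jn ≤ n →
      ‖xs (n + 1) - xs n‖ ≤ 1 / (k + 1)) := by
  have ht : 0 < 1 - α := sub_pos.2 hα1
  have hJt : 2 ≤ (1 - α) * Jn := by
    have := Nat.le_ceil (1 / (1 - α))
    rw [div_le_iff₀' ht] at this
    rw [hJn]; push_cast; linarith
  have hm : ∀ n : ℕ, 1 < (n : ℝ) + Jn := fun n => by nlinarith [n.cast_nonneg (α := ℝ)]
  have hlam : ∀ n, 0 < lam n := fun n => by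
    rw [hlamdef]; exact div_pos (by linarith [hm n]) (by linarith [hm n])
  have hT := fun n => IsResolvent.norm_sub_le hJ hA (hlam n)
  have hTz := fun n => IsResolvent.apply_eq_of_zero_mem hJ hA (hlam n) hz
  have hTT : ∀ n p, ‖Jr (lam (n + 1)) p - Jr (lam n) p‖
      ≤ 1 / ((n : ℝ) + Jn) ^ 2 * ‖p - Jr (lam n) p‖ := fun n p => by
    rw [hlamdef, hlamdef, Nat.cast_succ, add_right_comm, add_sub_cancel_right]
    exact IsResolvent.norm_apply_div_sub_apply_div_le hJ hA (hm n) p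
  have hbound : ∀ n, ‖xs n - z‖ ≤ Kz := fun n => by
    have hdist := vame_norm_sub_le hα0 hα1 (fun p => hf p z)
      (fun n p => by simpa only [hTz n] using hT n p z) hJt ha he hxs n
    rw [hxs0] at hdist
    linarith [Nat.le_ceil (‖estar‖ / ((Jn : ℝ) - 1))]
  have hfz : ‖f z - z‖ ≤ (1 - α) * Kz := by
    rw [← div_le_iff₀' ht]
    linarith [le_max_right ‖x - z‖ (‖f z - z‖ / (1 - α)),
      (⌈‖estar‖ / ((Jn : ℝ) - 1)⌉₊).cast_nonneg (α := ℝ)]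
  have hstep := vame_norm_succ_sub_le hα0 hα1 hf hT hTz hTT hJt ha he hxs hbound hfz
  refine ⟨fun n => by push_cast; exact hstep n, fun k n hn => (hstep n).trans ?_⟩
  refine div_le_one_div_succ_of_ceil_le ht ((Nat.cast_pos (α := ℝ)).1 (by nlinarith)) ?_ hn
  push_cast
  linarith [Nat.le_ceil ‖estar‖]

/-- Linear rate of asymptotic regularity of the VAMe iteration for concrete
instances of the parameter sequences. -/
theorem stmt_17 {X : Type*} [NormedAddCommGroup X] [NormedSpace ℝ X] [CompleteSpace X]
    (A : X → Set X)
    (hA : ∀ x y u v : X, u ∈ A x → v ∈ A y → ∀ γ : ℝ, 0 < γ →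
      ‖x - y‖ ≤ ‖x - y + γ • (u - v)‖)
    (hzer : ∃ z : X, (0 : X) ∈ A z)
    (Jr : ℝ → X → X)
    (hJ : ∀ γ : ℝ, 0 < γ → ∀ x : X, γ⁻¹ • (x - Jr γ x) ∈ A (Jr γ x))
    (α : ℝ) (hα0 : 0 ≤ α) (hα1 : α < 1)
    (f : X → X) (hf : ∀ x y : X, ‖f x - f y‖ ≤ α * ‖x - y‖)
    (x : X) (estar : X)
    (Jn : ℕ) (hJn : Jn = 2 * ⌈1 / (1 - α)⌉₊)
    (a : ℕ → ℝ) (ha : ∀ n : ℕ, a n = 2 / ((1 - α) * ((n : ℝ) + Jn)))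
    (lam : ℕ → ℝ) (hlamdef : ∀ n : ℕ, lam n = ((n : ℝ) + Jn) / ((n : ℝ) + Jn - 1))
    (e : ℕ → X) (he : ∀ n : ℕ, e n = (1 / ((n : ℝ) + Jn) ^ 2) • estar)
    (xs : ℕ → X) (hxs0 : xs 0 = x)
    (hxs : ∀ n : ℕ, xs (n + 1) = a n • f (xs n) + (1 - a n) • Jr (lam n) (xs n) + e n)
    (z : X) (hz : (0 : X) ∈ A z)
    (Kz : ℕ) (hKz1 : 1 ≤ Kz)
    (hKz : max ‖x - z‖ (‖f z - z‖ / (1 - α)) +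
      (⌈‖estar‖ / ((Jn : ℝ) - 1)⌉₊ : ℝ) ≤ (Kz : ℝ)) :
    (∀ n : ℕ, ‖xs (n + 1) - xs n‖ ≤
      ((3 * Jn * Kz : ℕ) + ‖estar‖) / ((1 - α) * ((n : ℝ) + Jn))) ∧
    (∀ k : ℕ, ∀ n,
      (3 * Jn * Kz + ⌈‖estar‖⌉₊) * ⌈1 / (1 - α)⌉₊ * (k + 1) - Jn ≤ n →
      ‖xs (n + 1) - xs n‖ ≤ 1 / (k + 1)) :=
  stmt_17_general A hA Jr hJ α hα0 hα1 f hf x estar Jn hJn a ha lam hlamdef e he xs hxs0 hxs z hz Kz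
    hKz
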